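/- Let X be a nonempty finite set of lists of Booleans and let y be a list of Booleans. Then the maximum over x ∈ X of the length of the longest common prefix of y and x is attained at an element x* that is either the lexicographic predecessor max{ x ∈ X : x ≤ y } or the lexicographic successor min{ x ∈ X : y ≤ x } of y in X (with respect to the lexicographic order in which false < true and a proper prefix precedes its extensions), whenever the respective element exists. -/

import Mathlib

/-!
The extensions of a fixed prefix form an interval in the lexicographic order, so the common
prefix of `x` with `y` can only grow as `x` moves towards `y`. Hence if `m ∈ X` maximises the
common prefix with `y` and, say, `m ≤ y`, then the predecessor of `y` in `X` lies between `m`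
and `y` and is a maximiser as well; symmetrically for the successor when `y ≤ m`.
-/

/-- The length of the longest common prefix of two Boolean lists. -/
def lcpLen : List Bool → List Bool → ℕ
  | a :: as, b :: bs => if a = b then lcpLen as bs + 1 else 0
  | _, _ => 0

/-- The lexicographic (dictionary) order on Boolean lists, with `false < true`
and a proper prefix preceding its extensions. -/
def lexLe (a b : List Bool) : Prop := List.Lex (· < ·) a b ∨ a = b

theorem lexLe_iff_le (a b : List Bool) : lexLe a b ↔ a ≤ b :=
  (le_iff_lt_or_eq (a := a) (b := b)).symm

theorem List.IsPrefix.length_le_lcpLen {p a b : List Bool} (ha : p <+: a) (hb : p <+: b) :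
    p.length ≤ lcpLen a b := by
  induction p generalizing a b with
  | nil => exact Nat.zero_le _
  | cons z p ih =>
    obtain ⟨a, rfl, hpa⟩ := cons_prefix_iff.1 ha
    obtain ⟨b, rfl, hpb⟩ := cons_prefix_iff.1 hb
    simpa [lcpLen] using ih hpa hpb

theorem exists_isPrefix_length_eq_lcpLen :
    ∀ a b : List Bool, ∃ p, p <+: a ∧ p <+: b ∧ p.length = lcpLen a b
  | x :: a, y :: b => by
    by_cases hxy : x = y
    · obtain ⟨p, hpa, hpb, hp⟩ := exists_isPrefix_length_eq_lcpLen a b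
      subst hxy
      exact ⟨x :: p, List.cons_prefix_cons.2 ⟨rfl, hpa⟩, List.cons_prefix_cons.2 ⟨rfl, hpb⟩,
        by simp [lcpLen, hp]⟩
    · exact ⟨[], List.nil_prefix, List.nil_prefix, by simp [lcpLen, hxy]⟩
  | [], _ => ⟨[], List.nil_prefix, List.nil_prefix, rfl⟩
  | _ :: _, [] => ⟨[], List.nil_prefix, List.nil_prefix, rfl⟩

theorem List.ordConnected_setOf_isPrefix {α : Type*} [LinearOrder α] (p : List α) :
    Set.OrdConnected {l : List α | p <+: l} := by
  refine ⟨fun a ha c hc b hb => ?_⟩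
  induction p generalizing a b c with
  | nil => exact nil_prefix
  | cons z p ih =>
    obtain ⟨a, rfl, hpa⟩ := cons_prefix_iff.1 ha
    obtain ⟨c, rfl, hpc⟩ := cons_prefix_iff.1 hc
    obtain ⟨hab, hbc⟩ := hb
    -- Mathlib's `≤` on lists is not core's, so core's `cons_le_cons_iff` does not fire; use `<`.
    rw [← not_lt] at hab hbc
    cases b with
    | nil => exact (hab (nil_lt_cons _ _)).elim
    | cons w b =>
      rw [cons_lt_cons_iff] at hab hbc
      push Not at hab hbc
      obtain rfl : z = w := le_antisymm hab.1 hbc.1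
      exact cons_prefix_cons.2 ⟨rfl, ih a hpa c hpc b ⟨hab.2 rfl, hbc.2 rfl⟩⟩

theorem lcpLen_le_lcpLen_of_mem_uIcc {x x' y : List Bool} (h : x' ∈ Set.uIcc x y) :
    lcpLen y x ≤ lcpLen y x' := by
  obtain ⟨p, hpy, hpx, hp⟩ := exists_isPrefix_length_eq_lcpLen y x
  rw [← hp]
  exact hpy.length_le_lcpLen <|
    (List.ordConnected_setOf_isPrefix p).uIcc_subset hpx hpy h

theorem Finset.exists_greatest_le {α : Type*} [LinearOrder α] {s : Finset α} {a b : α}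
    (ha : a ∈ s) (hab : a ≤ b) : ∃ c ∈ s, c ≤ b ∧ ∀ x ∈ s, x ≤ b → x ≤ c := by
  obtain ⟨c, hc, hmax⟩ := (s.filter (· ≤ b)).exists_max_image id ⟨a, mem_filter.2 ⟨ha, hab⟩⟩
  rw [mem_filter] at hc
  exact ⟨c, hc.1, hc.2, fun x hx hxb => hmax x (mem_filter.2 ⟨hx, hxb⟩)⟩

theorem Finset.exists_least_ge {α : Type*} [LinearOrder α] {s : Finset α} {a b : α}
    (ha : a ∈ s) (hba : b ≤ a) : ∃ c ∈ s, b ≤ c ∧ ∀ x ∈ s, b ≤ x → c ≤ x := by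
  obtain ⟨c, hc, hmin⟩ := (s.filter (b ≤ ·)).exists_min_image id ⟨a, mem_filter.2 ⟨ha, hba⟩⟩
  rw [mem_filter] at hc
  exact ⟨c, hc.1, hc.2, fun x hx hbx => hmin x (mem_filter.2 ⟨hx, hbx⟩)⟩

/-- Let `X` be a nonempty finite set of Boolean lists and `y` a Boolean list.
Then the maximum over `x ∈ X` of the length of the longest common prefix of
`y` and `x` is attained at an element `x*` that is either the lexicographic
predecessor `max{ x ∈ X : x ≤ y }` of `y` in `X`, or the lexicographic
successor `min{ x ∈ X : y ≤ x }` of `y` in `X` (whenever the respective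
element exists). -/
theorem statement16 (X : Finset (List Bool)) (hX : X.Nonempty) (y : List Bool) :
    ∃ xstar ∈ X, (∀ x ∈ X, lcpLen y x ≤ lcpLen y xstar) ∧
      ((lexLe xstar y ∧ ∀ x ∈ X, lexLe x y → lexLe x xstar) ∨
       (lexLe y xstar ∧ ∀ x ∈ X, lexLe y x → lexLe xstar x)) := by
  obtain ⟨m, hmX, hm⟩ := X.exists_max_image (lcpLen y) hX
  simp only [lexLe_iff_le]
  rcases le_total m y with hmy | hym
  · obtain ⟨p, hpX, hpy, hp⟩ := Finset.exists_greatest_le hmX hmy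
    refine ⟨p, hpX, fun x hx => (hm x hx).trans ?_, Or.inl ⟨hpy, hp⟩⟩
    exact lcpLen_le_lcpLen_of_mem_uIcc (Set.mem_uIcc_of_le (hp m hmX hmy) hpy)
  · obtain ⟨s, hsX, hys, hs⟩ := Finset.exists_least_ge hmX hym
    refine ⟨s, hsX, fun x hx => (hm x hx).trans ?_, Or.inr ⟨hys, hs⟩⟩
    exact lcpLen_le_lcpLen_of_mem_uIcc (Set.mem_uIcc_of_ge hys (hs m hmX hym))
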